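/- Bounded distortion: let f satisfy C⁻¹ ≤ |f'(x)|/|x|^{α-1} ≤ C and |f''(x)| ≤ C₁|x|^{α-2} for x ≠ 0 (so |f''/f'| ≤ C·C₁/|x|). Suppose J is an interval, n ≥ 1, f^s|_J is a diffeomorphism for 0 ≤ s ≤ n-1, |f^s(J)| < 1/(3m³), d(f^s(J),{0}) > 1/(2m³) for all such s, and |f^{n-1}(J)| ≥ (√2)^{n-1-t} |f^t(J)| for all t. Then for all x,y ∈ J, |log(|(f^n)'(y)| / |(f^n)'(x)|)| ≤ (2/3)·C·C₁·√2·(√2+1). -/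

import Mathlib

open MeasureTheory Set

/-- Bounded distortion: under the derivative asymptotics of the Lorenz map, along an
orbit of intervals staying at distance `> 1/(2m³)` from `0`, of lengths `< 1/(3m³)`, and
growing geometrically with ratio `√2`, the distortion of `f^n` is bounded by
`(2/3)·C·C₁·√2·(√2+1)`. -/
theorem stmt11 (f f' f'' : ℝ → ℝ) (C C₁ α : ℝ) (hC : 1 < C) (hC₁ : 1 < C₁)
    (hα : 0 < α ∧ α < 1)
    (hd1 : ∀ x : ℝ, x ≠ 0 → HasDerivAt f (f' x) x)
    (hd2 : ∀ x : ℝ, x ≠ 0 → HasDerivAt f' (f'' x) x)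
    (hb1 : ∀ x : ℝ, x ≠ 0 → C⁻¹ ≤ |f' x| / |x| ^ (α-1) ∧ |f' x| / |x| ^ (α-1) ≤ C)
    (hb2 : ∀ x : ℝ, x ≠ 0 → |f'' x| ≤ C₁ * |x| ^ (α-2))
    (m : ℝ) (hm : 1 ≤ m) (n : ℕ) (hn : 1 ≤ n)
    (a b : ℝ) (hab : a < b) (J : Set ℝ) (hJ : J = Icc a b)
    (hdiff : ∀ s < n, InjOn (f^[s]) J)
    (hlen : ∀ s < n, volume (f^[s] '' J) < ENNReal.ofReal (1/(3*m^3)))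
    (hdist : ∀ s < n, ∀ x ∈ J, 1/(2*m^3) < |f^[s] x|)
    (hgrow : ∀ t < n, ENNReal.ofReal (Real.sqrt 2 ^ (n-1-t)) * volume (f^[t] '' J)
        ≤ volume (f^[n-1] '' J)) :
    ∀ x ∈ J, ∀ y ∈ J,
      |Real.log (|deriv (f^[n]) y| / |deriv (f^[n]) x|)|
        ≤ (2/3)*C*C₁*Real.sqrt 2*(Real.sqrt 2 + 1) := by
  obtain ⟨hα0, hα1⟩ := hα
  have hm3 : (0:ℝ) < m ^ 3 := by positivity
  have hCpos : (0:ℝ) < C := by linarith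
  have hC1pos : (0:ℝ) < C₁ := by linarith
  have hδpos : (0:ℝ) < 1/(2*m^3) := by positivity
  -- f' is nonzero away from 0
  have hf'ne : ∀ z : ℝ, z ≠ 0 → f' z ≠ 0 := by
    intro z hz
    have h1 := (hb1 z hz).1
    have hz1 : (0:ℝ) < |z| ^ (α-1) := Real.rpow_pos_of_pos (abs_pos.mpr hz) _
    intro h0
    rw [h0] at h1
    simp only [abs_zero, zero_div] at h1
    have : (0:ℝ) < C⁻¹ := inv_pos.mpr hCpos
    linarith
  -- lower bound for |f'|
  have hf'lb : ∀ z : ℝ, z ≠ 0 → C⁻¹ * |z| ^ (α-1) ≤ |f' z| := by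
    intro z hz
    have h1 := (hb1 z hz).1
    have hz1 : (0:ℝ) < |z| ^ (α-1) := Real.rpow_pos_of_pos (abs_pos.mpr hz) _
    calc C⁻¹ * |z| ^ (α-1) ≤ (|f' z| / |z| ^ (α-1)) * |z| ^ (α-1) := by
          exact mul_le_mul_of_nonneg_right h1 hz1.le
      _ = |f' z| := div_mul_cancel₀ _ hz1.ne'
  -- iterates stay away from zero
  have hnz : ∀ z ∈ J, ∀ s, s < n → f^[s] z ≠ 0 := by
    intro z hz s hs h0
    have := hdist s hs z hz
    rw [h0, abs_zero] at this
    linarith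
  -- chain rule for iterates
  have iter_deriv : ∀ (k : ℕ) (z : ℝ), (∀ s, s < k → f^[s] z ≠ 0) →
      HasDerivAt (f^[k]) (∏ s ∈ Finset.range k, f' (f^[s] z)) z := by
    intro k
    induction k with
    | zero => intro z _; simpa using hasDerivAt_id z
    | succ k ih =>
      intro z hz
      have h1 : HasDerivAt (f^[k]) (∏ s ∈ Finset.range k, f' (f^[s] z)) z :=
        ih z (fun s hs => hz s (hs.trans (Nat.lt_succ_self k)))
      have h2 : HasDerivAt f (f' (f^[k] z)) (f^[k] z) :=
        hd1 _ (hz k (Nat.lt_succ_self k))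
      have h3 := h2.comp z h1
      rw [Finset.prod_range_succ, Function.iterate_succ']
      simpa [mul_comm] using h3
  intro x hx y hy
  -- derivative formula
  have hderiv : ∀ z ∈ J, deriv (f^[n]) z = ∏ s ∈ Finset.range n, f' (f^[s] z) := by
    intro z hz
    exact (iter_deriv n z (hnz z hz)).deriv
  have hne : ∀ z ∈ J, ∀ s ∈ Finset.range n, f' (f^[s] z) ≠ 0 := by
    intro z hz s hs
    exact hf'ne _ (hnz z hz s (Finset.mem_range.mp hs))
  -- rewrite the log of the quotient as a sum
  have keylog : Real.log (|deriv (f^[n]) y| / |deriv (f^[n]) x|)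
      = ∑ s ∈ Finset.range n,
        (Real.log (f' (f^[s] y)) - Real.log (f' (f^[s] x))) := by
    rw [hderiv x hx, hderiv y hy]
    rw [Real.log_div (abs_ne_zero.mpr (Finset.prod_ne_zero_iff.mpr (hne y hy)))
      (abs_ne_zero.mpr (Finset.prod_ne_zero_iff.mpr (hne x hx)))]
    rw [Finset.abs_prod, Finset.abs_prod,
      Real.log_prod (fun s hs => abs_ne_zero.mpr (hne y hy s hs)),
      Real.log_prod (fun s hs => abs_ne_zero.mpr (hne x hx s hs)),
      ← Finset.sum_sub_distrib]
    congr 1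
    ext s
    rw [Real.log_abs, Real.log_abs]
  have hr0 : (0:ℝ) < Real.sqrt 2 := Real.sqrt_pos.mpr (by norm_num)
  have hs2 : Real.sqrt 2 ^ 2 = 2 := Real.sq_sqrt (by norm_num)
  have hs1 : 1 < Real.sqrt 2 := by nlinarith
  -- per-term bound
  have term : ∀ s, s < n →
      |Real.log (f' (f^[s] y)) - Real.log (f' (f^[s] x))|
        ≤ 2/3*C*C₁ * ((Real.sqrt 2)⁻¹) ^ (n-1-s) := by
    intro s hs
    set u := f^[s] x with hu
    set v := f^[s] y with hv
    have hcont : ContinuousOn (f^[s]) J := fun z hz =>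
      (iter_deriv s z (fun t ht => hnz z hz t (ht.trans hs))).continuousAt.continuousWithinAt
    have hconn : IsPreconnected (f^[s] '' J) := by
      rw [hJ] at hcont ⊢
      exact isPreconnected_Icc.image _ hcont
    have hsub : uIcc u v ⊆ f^[s] '' J :=
      hconn.ordConnected.uIcc_subset (mem_image_of_mem _ hx) (mem_image_of_mem _ hy)
    have hbound : ∀ z ∈ uIcc u v,
        HasDerivWithinAt (fun w => Real.log (f' w)) ((f' z)⁻¹ * f'' z) (uIcc u v) z ∧
        ‖(f' z)⁻¹ * f'' z‖ ≤ C * C₁ * (2*m^3) := by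
      intro z hz
      obtain ⟨w, hw, rfl⟩ := hsub hz
      have hzdist := hdist s hs w hw
      have hz0 : f^[s] w ≠ 0 := fun h => by rw [h, abs_zero] at hzdist; linarith
      have hza : (0:ℝ) < |f^[s] w| := abs_pos.mpr hz0
      constructor
      · exact ((Real.hasDerivAt_log (hf'ne _ hz0)).comp _ (hd2 _ hz0)).hasDerivWithinAt
      · set z := f^[s] w
        have hP : (0:ℝ) < |z| ^ (α-1) := Real.rpow_pos_of_pos hza _
        have h1 : |f'' z| ≤ C₁ * (|z| ^ (α-1) * |z|⁻¹) := by
          have : |z| ^ (α-2) = |z| ^ (α-1) * |z|⁻¹ := by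
            rw [← Real.rpow_neg_one |z|, ← Real.rpow_add hza]
            congr 1
            ring
          have h := hb2 z hz0
          rw [this] at h
          exact h
        have h2 : C⁻¹ * |z| ^ (α-1) ≤ |f' z| := hf'lb z hz0
        have hf'p : (0:ℝ) < |f' z| := abs_pos.mpr (hf'ne _ hz0)
        have hC'P : (0:ℝ) < C⁻¹ * |z| ^ (α-1) := by positivity
        have hAinv : |f' z|⁻¹ ≤ (C⁻¹ * |z| ^ (α-1))⁻¹ := inv_anti₀ hC'P h2
        have hiz : |z|⁻¹ < 2*m^3 := by
          have h3 : (0:ℝ) < |z|⁻¹ := by positivity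
          have h4 : |z|⁻¹ * |z| = 1 := inv_mul_cancel₀ hza.ne'
          have h5 : 2*m^3 * (1/(2*m^3)) = 1 := by field_simp
          nlinarith
        have key : (C⁻¹ * |z| ^ (α-1))⁻¹ * (C₁ * (|z| ^ (α-1) * |z|⁻¹)) = C * C₁ * |z|⁻¹ := by
          field_simp
        calc ‖(f' z)⁻¹ * f'' z‖ = |f' z|⁻¹ * |f'' z| := by
              rw [Real.norm_eq_abs, abs_mul, abs_inv]
          _ ≤ (C⁻¹ * |z| ^ (α-1))⁻¹ * (C₁ * (|z| ^ (α-1) * |z|⁻¹)) := by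
              apply mul_le_mul hAinv h1 (abs_nonneg _) (by positivity)
          _ = C * C₁ * |z|⁻¹ := key
          _ ≤ C * C₁ * (2*m^3) := by
              apply mul_le_mul_of_nonneg_left hiz.le (by positivity)
    have hmvt := Convex.norm_image_sub_le_of_norm_hasDerivWithin_le
      (fun z hz => (hbound z hz).1) (fun z hz => (hbound z hz).2) (convex_uIcc u v)
      left_mem_uIcc right_mem_uIcc
    rw [Real.norm_eq_abs] at hmvt
    -- length bound
    have hvol : ENNReal.ofReal (Real.sqrt 2 ^ (n-1-s) * |v - u|) ≤ ENNReal.ofReal (1/(3*m^3)) := by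
      rw [ENNReal.ofReal_mul (pow_nonneg hr0.le _)]
      calc ENNReal.ofReal (Real.sqrt 2 ^ (n-1-s)) * ENNReal.ofReal |v - u|
          ≤ ENNReal.ofReal (Real.sqrt 2 ^ (n-1-s)) * volume (f^[s] '' J) := by
            apply mul_le_mul_right
            rw [← Real.volume_interval]
            exact measure_mono hsub
        _ ≤ volume (f^[n-1] '' J) := hgrow s hs
        _ ≤ ENNReal.ofReal (1/(3*m^3)) := (hlen (n-1) (by omega)).le
    have hlen' : Real.sqrt 2 ^ (n-1-s) * |v - u| ≤ 1/(3*m^3) :=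
      (ENNReal.ofReal_le_ofReal_iff (by positivity)).mp hvol
    have habs : |v - u| ≤ 1/(3*m^3) * ((Real.sqrt 2)⁻¹) ^ (n-1-s) := by
      rw [inv_pow, ← div_eq_mul_inv, le_div_iff₀ (pow_pos hr0 _)]
      linarith [hlen']
    calc |Real.log (f' v) - Real.log (f' u)|
        ≤ C * C₁ * (2*m^3) * |v - u| := hmvt
      _ ≤ C * C₁ * (2*m^3) * (1/(3*m^3) * ((Real.sqrt 2)⁻¹) ^ (n-1-s)) := by
          apply mul_le_mul_of_nonneg_left habs (by positivity)
      _ = 2/3*C*C₁ * ((Real.sqrt 2)⁻¹) ^ (n-1-s) := by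
          field_simp
  -- sum the bounds
  rw [keylog]
  have hrlt : (Real.sqrt 2)⁻¹ < 1 := inv_lt_one_of_one_lt₀ hs1
  have hrnn : (0:ℝ) ≤ (Real.sqrt 2)⁻¹ := by positivity
  have hsum : ∑ j ∈ Finset.range n, ((Real.sqrt 2)⁻¹) ^ j ≤ (1 - (Real.sqrt 2)⁻¹)⁻¹ := by
    have h1 := Summable.sum_le_tsum (Finset.range n) (fun i _ => pow_nonneg hrnn i)
      (summable_geometric_of_lt_one hrnn hrlt)
    rwa [tsum_geometric_of_lt_one hrnn hrlt] at h1
  have hinv : (1 - (Real.sqrt 2)⁻¹)⁻¹ = Real.sqrt 2 * (Real.sqrt 2 + 1) := by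
    rw [show (1:ℝ) - (Real.sqrt 2)⁻¹ = (Real.sqrt 2 - 1)/Real.sqrt 2 by
        rw [sub_div, div_self hr0.ne', one_div], inv_div,
      div_eq_iff (sub_ne_zero.mpr hs1.ne')]
    linear_combination (-Real.sqrt 2) * hs2
  calc |∑ s ∈ Finset.range n, (Real.log (f' (f^[s] y)) - Real.log (f' (f^[s] x)))|
      ≤ ∑ s ∈ Finset.range n, |Real.log (f' (f^[s] y)) - Real.log (f' (f^[s] x))| :=
        Finset.abs_sum_le_sum_abs _ _
    _ ≤ ∑ s ∈ Finset.range n, 2/3*C*C₁ * ((Real.sqrt 2)⁻¹) ^ (n-1-s) :=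
        Finset.sum_le_sum (fun s hs => term s (Finset.mem_range.mp hs))
    _ = 2/3*C*C₁ * ∑ s ∈ Finset.range n, ((Real.sqrt 2)⁻¹) ^ (n-1-s) := by
        rw [Finset.mul_sum]
    _ = 2/3*C*C₁ * ∑ j ∈ Finset.range n, ((Real.sqrt 2)⁻¹) ^ j := by
        rw [Finset.sum_range_reflect (fun j => ((Real.sqrt 2)⁻¹) ^ j) n]
    _ ≤ 2/3*C*C₁ * (1 - (Real.sqrt 2)⁻¹)⁻¹ := by
        apply mul_le_mul_of_nonneg_left hsum (by positivity)
    _ = (2/3)*C*C₁*Real.sqrt 2*(Real.sqrt 2 + 1) := by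
        rw [hinv]; ring
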